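/- Let H be a maximizer of H ↦ vol_k([0,1]^n | H) over k-dimensional subspaces of ℝ^n, and let v_i be the orthogonal projection of e_i onto H. Then for any i, j ∈ [n]: |v_i|² ≥ (√2 − 1)|v_j|². -/

import Mathlib

/-!
By Shephard's formula the volume is `F v = ∑_L |det v_L|` over the `k`-subsets `L`; write `F_i`
for the part of the sum over the `L` containing `i`. Two perturbations of a maximizer `v` within
the tight frames give the result.

Stretching along `vᵢ` (`v_m ↦ (1 + α vᵢvᵢᵀ) v_m` for `m ≠ i` and `vᵢ ↦ β(α) vᵢ`, where `β(α)` is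
chosen to keep the frame tight) turns `F` into `(1 + α|vᵢ|²)(F - F_i) + β(α) F_i`; its derivative
vanishes at `α = 0`, which says `F_i = |vᵢ|² F`.

Replacing `vᵢ, vⱼ` by `(vᵢ ± vⱼ)/√2` negates the minors containing both indices, fixes those
containing neither, and pairs each `L ∋ i, ∌ j` with `L' = (L \ {i}) ∪ {j}`, whose minors are,
up to sign, one linear form evaluated at the `i`-th, resp. `j`-th vector. The triangle inequality in
each pair and maximality give `(√2 - 1) F_j ≤ F_i`. As `v` spans `ℝᵏ`, `F > 0`, and the two
relations combine.
-/

open scoped Matrix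

/-- Shephard's formula: the `k`-dimensional volume of the zonotope
`∑ᵢ [0, vᵢ] ⊆ ℝ^k` (equivalently, of the projection of the cube `[0,1]^n` onto
the subspace corresponding to the tight frame `v`), namely
`∑_{L ∈ C([n],k)} |det (v_{i₁}, ..., v_{i_k})|`. -/
noncomputable def zonVol {n k : ℕ} (v : Fin n → Fin k → ℝ) : ℝ :=
  ∑ L : {s : Finset (Fin n) // s.card = k},
    |Matrix.det (Matrix.of fun a b : Fin k => v (L.1.orderIsoOfFin L.2 b) a)|

open Function Matrix

theorem AlternatingMap.map_update_update_smul_add {R M N ι : Type*} [CommRing R]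
    [AddCommGroup M] [Module R M] [AddCommGroup N] [Module R N] [DecidableEq ι]
    (f : M [⋀^ι]→ₗ[R] N) (u : ι → M) {p q : ι} (hpq : p ≠ q) (a b c d : R) :
    f (update (update u p (a • u p + b • u q)) q (c • u p + d • u q)) = (a * d - b * c) • f u := by
  have hswap : f (update (update u q (u p)) p (u q)) = -f u := by
    rw [← f.map_swap u hpq, Equiv.comp_swap_eq_update]
  set X := a • u p + b • u q with hX
  have hkeep : f (update (update u p X) q (u q)) = f (update u p X) := by
    rw [← update_of_ne hpq.symm X u, update_eq_self]
  rw [f.map_update_add, f.map_update_smul, f.map_update_smul, hkeep, update_comm hpq, hX]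
  simp only [f.map_update_add, f.map_update_smul, update_eq_self, hswap,
    f.map_update_self u hpq, f.map_update_update u hpq.symm]
  module

theorem Finset.exists_orderEmbOfFin_eq {α : Type*} [LinearOrder α] {s : Finset α} {k : ℕ}
    (h : s.card = k) {a : α} (ha : a ∈ s) : ∃ p, s.orderEmbOfFin h p = a := by
  rwa [← Set.mem_range, Finset.range_orderEmbOfFin]

section Minor

variable {R : Type*} [CommRing R] {n k : ℕ} {v : Fin n → Fin k → R}
  {L : {s : Finset (Fin n) // s.card = k}} {i j : Fin n}

noncomputable def minorDet (v : Fin n → Fin k → R) (L : {s : Finset (Fin n) // s.card = k}) : R :=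
  (of (v ∘ L.1.orderEmbOfFin L.2)).det

theorem zonVol_eq_sum_abs_minorDet (v : Fin n → Fin k → ℝ) :
    zonVol v = ∑ L, |minorDet v L| := by
  refine Finset.sum_congr rfl fun L _ => ?_
  rw [minorDet, ← det_transpose]
  rfl

theorem minorDet_update_of_notMem (hi : i ∉ L.1) (x : Fin k → R) :
    minorDet (update v i x) L = minorDet v L := by
  rw [minorDet, update_comp_eq_of_notMem_range]
  · rfl
  · rwa [Finset.range_orderEmbOfFin]

theorem minorDet_update_of_orderEmbOfFin_eq {p : Fin k} (hp : L.1.orderEmbOfFin L.2 p = i)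
    (x : Fin k → R) :
    minorDet (update v i x) L = detRowAlternating (update (v ∘ L.1.orderEmbOfFin L.2) p x) := by
  subst hp
  rw [minorDet, update_comp_eq_of_injective _ (L.1.orderEmbOfFin L.2).injective]
  rfl

theorem minorDet_update_add (hi : i ∈ L.1) (x y : Fin k → R) :
    minorDet (update v i (x + y)) L = minorDet (update v i x) L + minorDet (update v i y) L := by
  obtain ⟨p, hp⟩ := Finset.exists_orderEmbOfFin_eq L.2 hi
  simp only [minorDet_update_of_orderEmbOfFin_eq hp, AlternatingMap.map_update_add]

theorem minorDet_update_smul (hi : i ∈ L.1) (c : R) (x : Fin k → R) :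
    minorDet (update v i (c • x)) L = c * minorDet (update v i x) L := by
  obtain ⟨p, hp⟩ := Finset.exists_orderEmbOfFin_eq L.2 hi
  simp only [minorDet_update_of_orderEmbOfFin_eq hp, AlternatingMap.map_update_smul, smul_eq_mul]

theorem minorDet_update_update (hi : i ∈ L.1) (hj : j ∈ L.1) (hij : i ≠ j) (a b c d : R) :
    minorDet (update (update v i (a • v i + b • v j)) j (c • v i + d • v j)) L
      = (a * d - b * c) * minorDet v L := by
  obtain ⟨p, rfl⟩ := Finset.exists_orderEmbOfFin_eq L.2 hi
  obtain ⟨q, rfl⟩ := Finset.exists_orderEmbOfFin_eq L.2 hj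
  have hpq : p ≠ q := ne_of_apply_ne _ hij
  have hinj := (L.1.orderEmbOfFin L.2).injective
  rw [minorDet, update_comp_eq_of_injective _ hinj, update_comp_eq_of_injective _ hinj]
  exact (detRowAlternating.map_update_update_smul_add _ hpq a b c d).trans (smul_eq_mul _ _)

theorem minorDet_update_smul_self (hi : i ∈ L.1) (c : R) :
    minorDet (update v i (c • v i)) L = c * minorDet v L := by
  rw [minorDet_update_smul hi, update_eq_self]

theorem minorDet_mulVec (A : Matrix (Fin k) (Fin k) R) (L) :
    minorDet (fun m => A *ᵥ v m) L = A.det * minorDet v L := by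
  have : of ((fun m => A *ᵥ v m) ∘ L.1.orderEmbOfFin L.2)
      = of (v ∘ L.1.orderEmbOfFin L.2) * Aᵀ := by
    ext a b
    simp [mul_apply, mulVec, dotProduct, mul_comm]
  rw [minorDet, minorDet, this, det_mul, det_transpose, mul_comm]

theorem abs_minorDet_eq_of_range {v : Fin n → Fin k → ℝ} {g : Fin k → Fin n} (hg : Injective g)
    (hL : Set.range g = L.1) : |(of (v ∘ g)).det| = |minorDet v L| := by
  have hmem (b : Fin k) : g b ∈ Set.range (L.1.orderEmbOfFin L.2) := by
    rw [Finset.range_orderEmbOfFin, ← hL]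
    exact ⟨b, rfl⟩
  choose σ hσ using hmem
  have hσ_inj : Injective σ := fun b b' h => hg (by rw [← hσ b, ← hσ b', h])
  let π := Equiv.ofBijective σ (Finite.injective_iff_bijective.1 hσ_inj)
  have hsub : of (v ∘ g) = (of (v ∘ L.1.orderEmbOfFin L.2)).submatrix π id := by
    ext a b
    simp [π, hσ]
  rw [hsub, det_permute, minorDet, abs_mul, abs_unit_intCast, one_mul]

def permSubsets {ι : Type*} (π : Equiv.Perm ι) (k : ℕ) : Equiv.Perm {s : Finset ι // s.card = k} :=
  (Equiv.finsetCongr π).subtypeEquiv fun s => by simp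

theorem mem_permSubsets {ι : Type*} (π : Equiv.Perm ι) {k : ℕ} (s : {s : Finset ι // s.card = k})
    (x : ι) : x ∈ (permSubsets π k s).1 ↔ π.symm x ∈ s.1 := by
  simp [permSubsets, Finset.mem_map_equiv]

theorem abs_minorDet_update_permSubsets_swap {v : Fin n → Fin k → ℝ} (hj : j ∉ L.1)
    (x : Fin k → ℝ) :
    |minorDet (update v j x) (permSubsets (Equiv.swap i j) k L)| = |minorDet (update v i x) L| := by
  have hrange : Set.range (Equiv.swap i j ∘ L.1.orderEmbOfFin L.2)
      = (permSubsets (Equiv.swap i j) k L).1 := by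
    ext m
    simp [Set.range_comp, mem_permSubsets]
  rw [← abs_minorDet_eq_of_range
    ((Equiv.injective _).comp (L.1.orderEmbOfFin L.2).injective) hrange, minorDet]
  congr 3
  funext b
  obtain ⟨m, hmL, hm⟩ : ∃ m ∈ L.1, L.1.orderEmbOfFin L.2 b = m := ⟨_, by simp, rfl⟩
  have hmj : m ≠ j := fun h => hj (h ▸ hmL)
  simp only [Function.comp_apply, hm]
  by_cases hmi : m = i
  · simp [hmi]
  · simp [Equiv.swap_apply_of_ne_of_ne hmi hmj, hmi, hmj]

end Minor

section Frame

variable {ι κ R : Type*} [Fintype ι] [Fintype κ] [CommRing R]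

def frameOperator (v : ι → κ → R) : Matrix κ κ R :=
  ∑ m, vecMulVec (v m) (v m)

omit [Fintype κ] in
theorem frameOperator_update [DecidableEq ι] (v : ι → κ → R) (i : ι) (x : κ → R) :
    frameOperator (update v i x) = frameOperator v - vecMulVec (v i) (v i) + vecMulVec x x := by
  have hsum (u : ι → κ → R) :
      frameOperator u = vecMulVec (u i) (u i) + ∑ m ∈ Finset.univ.erase i, vecMulVec (u m) (u m) :=
    (Finset.add_sum_erase _ _ (Finset.mem_univ i)).symm
  rw [hsum, hsum v, update_self, Finset.sum_congr rfl fun m hm =>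
    by rw [update_of_ne (Finset.ne_of_mem_erase hm)]]
  abel

theorem frameOperator_mulVec (A : Matrix κ κ R) (v : ι → κ → R) :
    frameOperator (fun m => A *ᵥ v m) = A * frameOperator v * Aᵀ := by
  simp only [frameOperator, Finset.mul_sum, Finset.sum_mul, mul_vecMulVec, vecMulVec_mul,
    vecMul_transpose]

theorem frameOperator_mulVec_eq_sum (v : ι → κ → R) (x : κ → R) :
    frameOperator v *ᵥ x = ∑ m, (v m ⬝ᵥ x) • v m := by
  simp [frameOperator, sum_mulVec, vecMulVec_mulVec]

end Frame

section Mix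

variable {n k : ℕ} {v : Fin n → Fin k → ℝ} {L : {s : Finset (Fin n) // s.card = k}} {i j : Fin n}
  {c : ℝ}

def mixPair (v : Fin n → Fin k → ℝ) (i j : Fin n) (c : ℝ) : Fin n → Fin k → ℝ :=
  update (update v i (c • v i + c • v j)) j (c • v i + (-c) • v j)

theorem frameOperator_mixPair (hij : i ≠ j) (hc : 2 * c ^ 2 = 1) :
    frameOperator (mixPair v i j c) = frameOperator v := by
  rw [mixPair, frameOperator_update, frameOperator_update, update_of_ne hij.symm]
  simp only [add_vecMulVec, vecMulVec_add, smul_vecMulVec, vecMulVec_smul]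
  linear_combination (norm := module) hc • (vecMulVec (v i) (v i) + vecMulVec (v j) (v j))

theorem minorDet_mixPair_of_mem (hi : i ∈ L.1) (hj : j ∈ L.1) (hij : i ≠ j) :
    minorDet (mixPair v i j c) L = -(2 * c ^ 2) * minorDet v L := by
  rw [mixPair, minorDet_update_update hi hj hij]
  ring

theorem minorDet_mixPair_of_notMem (hi : i ∉ L.1) (hj : j ∉ L.1) :
    minorDet (mixPair v i j c) L = minorDet v L := by
  rw [mixPair, minorDet_update_of_notMem hj, minorDet_update_of_notMem hi]

theorem two_mul_abs_minorDet_permSubsets_le (hij : i ≠ j) (hi : i ∈ L.1) (hj : j ∉ L.1)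
    (hc : 0 ≤ c) :
    2 * c * |minorDet v (permSubsets (Equiv.swap i j) k L)|
      ≤ |minorDet (mixPair v i j c) L|
        + |minorDet (mixPair v i j c) (permSubsets (Equiv.swap i j) k L)| := by
  set L' := permSubsets (Equiv.swap i j) k L
  have hiL' : i ∉ L'.1 := by simpa [L', mem_permSubsets] using hj
  set D := fun x => minorDet (update v i x) L
  have hD (a b : ℝ) (x y : Fin k → ℝ) : D (a • x + b • y) = a * D x + b * D y := by
    simp only [D, minorDet_update_add hi, minorDet_update_smul hi]
  have hL : minorDet (mixPair v i j c) L = c * D (v i) + c * D (v j) := by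
    rw [mixPair, minorDet_update_of_notMem hj, ← hD]
  have hL' : |minorDet (mixPair v i j c) L'| = |c * D (v i) + -c * D (v j)| := by
    rw [mixPair, update_comm hij, minorDet_update_of_notMem hiL',
      abs_minorDet_update_permSubsets_swap hj, ← hD]
  have hvL' : |minorDet v L'| = |D (v j)| := by
    rw [← abs_minorDet_update_permSubsets_swap hj, update_eq_self]
  have key := abs_sub (c * D (v i) + c * D (v j)) (c * D (v i) + -c * D (v j))
  rw [hL, hL', hvL']
  calc 2 * c * |D (v j)| = |c * D (v i) + c * D (v j) - (c * D (v i) + -c * D (v j))| := by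
        rw [show c * D (v i) + c * D (v j) - (c * D (v i) + -c * D (v j)) = (2 * c) * D (v j) by
          ring, abs_mul, abs_of_nonneg (by positivity : (0 : ℝ) ≤ 2 * c)]
    _ ≤ _ := key

theorem sum_filter_permSubsets_swap (g : {s : Finset (Fin n) // s.card = k} → ℝ) :
    ∑ L with i ∈ L.1 ∧ j ∉ L.1, g (permSubsets (Equiv.swap i j) k L)
      = ∑ L with j ∈ L.1 ∧ i ∉ L.1, g L :=
  Finset.sum_equiv (permSubsets (Equiv.swap i j) k)
    (fun L => by simp [mem_permSubsets, Equiv.swap_apply_left, Equiv.swap_apply_right])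
    (fun _ _ => rfl)

theorem zonVol_mixPair_sub (hij : i ≠ j) (hc : 2 * c ^ 2 = 1) :
    zonVol (mixPair v i j c) - zonVol v
      = ∑ L with i ∈ L.1 ∧ j ∉ L.1,
          (|minorDet (mixPair v i j c) L|
              + |minorDet (mixPair v i j c) (permSubsets (Equiv.swap i j) k L)|
            - (|minorDet v L| + |minorDet v (permSubsets (Equiv.swap i j) k L)|)) := by
  set g := fun L => |minorDet (mixPair v i j c) L| - |minorDet v L|
  have hg (L : {s : Finset (Fin n) // s.card = k}) :
      g L = (if i ∈ L.1 ∧ j ∉ L.1 then g L else 0) + (if j ∈ L.1 ∧ i ∉ L.1 then g L else 0) := by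
    by_cases hi : i ∈ L.1 <;> by_cases hj : j ∈ L.1 <;> simp only [g, hi, hj] <;> norm_num
    · rw [minorDet_mixPair_of_mem hi hj hij, hc]
      simp
    · rw [minorDet_mixPair_of_notMem hi hj, sub_self]
  rw [zonVol_eq_sum_abs_minorDet, zonVol_eq_sum_abs_minorDet, ← Finset.sum_sub_distrib,
    Finset.sum_congr rfl fun L _ => hg L, Finset.sum_add_distrib, ← Finset.sum_filter,
    ← Finset.sum_filter, ← sum_filter_permSubsets_swap (i := i) (j := j) g,
    ← Finset.sum_add_distrib]
  exact Finset.sum_congr rfl fun L _ => by ring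

end Mix

section Positivity

variable {n k : ℕ} {v : Fin n → Fin k → ℝ}

theorem exists_minorDet_ne_zero (hv : Submodule.span ℝ (Set.range v) = ⊤) :
    ∃ L, minorDet v L ≠ 0 := by
  obtain ⟨κ, a, ha, hspan, hli⟩ := exists_linearIndependent' ℝ v
  have : Finite κ := Finite.of_injective a ha
  have : Fintype κ := Fintype.ofFinite κ
  let b := Module.Basis.mk hli (by rw [hspan, hv])
  have hcard : Fintype.card κ = k := by simpa using (Module.finrank_eq_card_basis b).symm
  let e : Fin k ≃ κ := (Fintype.equivFinOfCardEq hcard).symm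
  have hg : Function.Injective (a ∘ e) := ha.comp e.injective
  refine ⟨⟨Finset.univ.map ⟨a ∘ e, hg⟩, by simp⟩, fun h0 => ?_⟩
  have hrange : Set.range (a ∘ e) = (Finset.univ.map ⟨a ∘ e, hg⟩ : Finset (Fin n)) := by
    rw [Finset.coe_map, Finset.coe_univ, Set.image_univ]
    rfl
  rw [← abs_eq_zero, ← abs_minorDet_eq_of_range hg hrange, abs_eq_zero] at h0
  have hunit : IsUnit (of (v ∘ a ∘ e)) :=
    linearIndependent_rows_iff_isUnit.1 (hli.comp e e.injective)
  exact ((isUnit_iff_isUnit_det _).1 hunit).ne_zero h0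

theorem zonVol_pos (hv : frameOperator v = 1) : 0 < zonVol v := by
  have hspan : Submodule.span ℝ (Set.range v) = ⊤ := by
    refine Submodule.eq_top_iff'.2 fun x => ?_
    rw [← one_mulVec x, ← hv, frameOperator_mulVec_eq_sum]
    exact Submodule.sum_mem _ fun m _ => Submodule.smul_mem _ _ (Submodule.subset_span ⟨m, rfl⟩)
  obtain ⟨L, hL⟩ := exists_minorDet_ne_zero hspan
  rw [zonVol_eq_sum_abs_minorDet]
  exact Finset.sum_pos' (fun _ _ => abs_nonneg _) ⟨L, Finset.mem_univ _, abs_pos.2 hL⟩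

end Positivity

section Maximizer

variable {n k : ℕ} {v : Fin n → Fin k → ℝ} {i j : Fin n} {c : ℝ}

noncomputable def zonVolWith (v : Fin n → Fin k → ℝ) (i : Fin n) : ℝ :=
  ∑ L with i ∈ L.1, |minorDet v L|

noncomputable def stretch (v : Fin n → Fin k → ℝ) (i : Fin n) (α β : ℝ) : Fin n → Fin k → ℝ :=
  update (fun m => (1 + α • vecMulVec (v i) (v i)) *ᵥ v m) i (β • v i)

theorem one_add_smul_vecMulVec_mulVec_self (x : Fin k → ℝ) (α : ℝ) :
    (1 + α • vecMulVec x x) *ᵥ x = (1 + α * (x ⬝ᵥ x)) • x := by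
  rw [add_mulVec, one_mulVec, smul_mulVec, vecMulVec_mulVec, op_smul_eq_smul]
  module

theorem frameOperator_stretch (hv : frameOperator v = 1) (i : Fin n) {α β : ℝ}
    (hβ : β ^ 2 = 1 + (2 * α + α ^ 2 * (v i ⬝ᵥ v i)) * (v i ⬝ᵥ v i - 1)) :
    frameOperator (stretch v i α β) = 1 := by
  have hP : vecMulVec (v i) (v i) * vecMulVec (v i) (v i)
      = (v i ⬝ᵥ v i) • vecMulVec (v i) (v i) := by
    rw [vecMulVec_mul_vecMulVec, vecMulVec_smul]
  rw [stretch, frameOperator_update, frameOperator_mulVec, hv, one_add_smul_vecMulVec_mulVec_self,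
    Matrix.mul_one, transpose_add, transpose_one, transpose_smul, transpose_vecMulVec]
  simp only [smul_vecMulVec, vecMulVec_smul, add_mul, mul_add, Matrix.mul_one, Matrix.one_mul,
    smul_mul_assoc, mul_smul_comm, hP, smul_smul]
  linear_combination (norm := module) hβ • vecMulVec (v i) (v i)

theorem det_one_add_smul_vecMulVec_self (x : Fin k → ℝ) (α : ℝ) :
    (1 + α • vecMulVec x x).det = 1 + α * (x ⬝ᵥ x) := by
  rw [← vecMulVec_smul, vecMulVec_eq Unit, det_one_add_replicateCol_mul_replicateRow,
    smul_dotProduct, smul_eq_mul]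

theorem zonVol_stretch (i : Fin n) {α β : ℝ} (hα : 0 < 1 + α * (v i ⬝ᵥ v i)) (hβ : 0 ≤ β) :
    zonVol (stretch v i α β)
      = (1 + α * (v i ⬝ᵥ v i)) * (zonVol v - zonVolWith v i) + β * zonVolWith v i := by
  set S := 1 + α • vecMulVec (v i) (v i)
  set s := 1 + α * (v i ⬝ᵥ v i)
  have habs (L : {s : Finset (Fin n) // s.card = k}) : |minorDet (stretch v i α β) L|
      = if i ∈ L.1 then β * |minorDet v L| else s * |minorDet v L| := by
    split_ifs with hi
    · have hβv : β • v i = (β / s) • S *ᵥ v i := by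
        rw [one_add_smul_vecMulVec_mulVec_self, smul_smul, div_mul_cancel₀ _ hα.ne']
      rw [stretch, hβv, minorDet_update_smul_self hi, minorDet_mulVec,
        det_one_add_smul_vecMulVec_self, ← mul_assoc, div_mul_cancel₀ _ hα.ne', abs_mul,
        abs_of_nonneg hβ]
    · rw [stretch, minorDet_update_of_notMem hi, minorDet_mulVec, det_one_add_smul_vecMulVec_self,
        abs_mul, abs_of_pos hα]
  have hsplit := Finset.sum_filter_add_sum_filter_not Finset.univ
    (fun L : {s : Finset (Fin n) // s.card = k} => i ∈ L.1) fun L => |minorDet v L|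
  rw [zonVol_eq_sum_abs_minorDet, Finset.sum_congr rfl fun L _ => habs L, Finset.sum_ite,
    ← Finset.mul_sum, ← Finset.mul_sum, zonVol_eq_sum_abs_minorDet, ← hsplit, zonVolWith]
  ring

theorem zonVol_add_le_zonVol_mixPair_add (hij : i ≠ j) (hc : 2 * c ^ 2 = 1) (hc0 : 0 ≤ c) :
    zonVol v + (2 * c - 1) * ∑ L with j ∈ L.1 ∧ i ∉ L.1, |minorDet v L|
      ≤ zonVol (mixPair v i j c) + ∑ L with i ∈ L.1 ∧ j ∉ L.1, |minorDet v L| := by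
  have hdiff := zonVol_mixPair_sub (v := v) hij hc
  have hpair : ∑ L with i ∈ L.1 ∧ j ∉ L.1, 2 * c * |minorDet v (permSubsets (Equiv.swap i j) k L)|
      ≤ ∑ L with i ∈ L.1 ∧ j ∉ L.1, (|minorDet (mixPair v i j c) L|
        + |minorDet (mixPair v i j c) (permSubsets (Equiv.swap i j) k L)|) :=
    Finset.sum_le_sum fun L hL => two_mul_abs_minorDet_permSubsets_le hij
      (Finset.mem_filter.1 hL).2.1 (Finset.mem_filter.1 hL).2.2 hc0
  rw [← sum_filter_permSubsets_swap (i := i) (j := j)]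
  simp only [Finset.sum_sub_distrib, Finset.sum_add_distrib, ← Finset.mul_sum] at hdiff hpair
  linarith

theorem mul_zonVolWith_le_of_mul_sum_le {t : ℝ} (ht : t ≤ 1)
    (h : t * ∑ L with j ∈ L.1 ∧ i ∉ L.1, |minorDet v L|
      ≤ ∑ L with i ∈ L.1 ∧ j ∉ L.1, |minorDet v L|) :
    t * zonVolWith v j ≤ zonVolWith v i := by
  have hterm (L : {s : Finset (Fin n) // s.card = k}) :
      t * (if j ∈ L.1 then |minorDet v L| else 0)
        ≤ (if i ∈ L.1 then |minorDet v L| else 0)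
          + (t * (if j ∈ L.1 ∧ i ∉ L.1 then |minorDet v L| else 0)
            - (if i ∈ L.1 ∧ j ∉ L.1 then |minorDet v L| else 0)) := by
    by_cases hi : i ∈ L.1 <;> by_cases hj : j ∈ L.1 <;> simp [hi, hj]
    exact mul_le_of_le_one_left (abs_nonneg _) ht
  have hsum := Finset.sum_le_sum fun L (_ : L ∈ Finset.univ) => hterm L
  simp only [zonVolWith, Finset.sum_filter, Finset.mul_sum] at h ⊢
  rw [Finset.sum_add_distrib, Finset.sum_sub_distrib] at hsum
  linarith

theorem zonVolWith_eq_of_isMax (hv : frameOperator v = 1)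
    (hmax : ∀ w : Fin n → Fin k → ℝ, frameOperator w = 1 → zonVol w ≤ zonVol v) (i : Fin n) :
    zonVolWith v i = (v i ⬝ᵥ v i) * zonVol v := by
  set p := v i ⬝ᵥ v i
  set F := zonVol v
  set G := zonVolWith v i
  set r : ℝ → ℝ := fun α => 1 + (2 * α + α ^ 2 * p) * (p - 1)
  set h : ℝ → ℝ := fun α => (1 + α * p) * (F - G) + √(r α) * G
  have hr : HasDerivAt r (2 * (p - 1)) 0 :=
    (((((hasDerivAt_id (0 : ℝ)).const_mul 2).add
      ((hasDerivAt_pow 2 (0 : ℝ)).mul_const p)).mul_const (p - 1)).const_add 1).congr_deriv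
      (by simp)
  have hh : HasDerivAt h (p * (F - G) + (p - 1) * G) 0 :=
    (((((hasDerivAt_id (0 : ℝ)).mul_const p).const_add 1).mul_const (F - G)).add
      ((hr.sqrt (by simp [r])).mul_const G)).congr_deriv (by simp [r])
  have hlocal : IsLocalMax h 0 := by
    have hr_pos : ∀ᶠ α in nhds 0, 0 < r α := hr.continuousAt.eventually (lt_mem_nhds (by simp [r]))
    have hs_pos : ∀ᶠ α in nhds 0, 0 < 1 + α * p := by
      have : ContinuousAt (fun α : ℝ => 1 + α * p) 0 := by fun_prop
      exact this.eventually (lt_mem_nhds (by simp))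
    filter_upwards [hr_pos, hs_pos] with α hrα hsα
    have hw := hmax _ (frameOperator_stretch hv i (β := √(r α)) (Real.sq_sqrt hrα.le))
    rw [zonVol_stretch i hsα (Real.sqrt_nonneg _)] at hw
    simpa [h, r] using hw
  linarith [hlocal.hasDerivAt_eq_zero hh]

theorem sqrt_two_sub_one_mul_zonVolWith_le (hv : frameOperator v = 1)
    (hmax : ∀ w : Fin n → Fin k → ℝ, frameOperator w = 1 → zonVol w ≤ zonVol v) (i j : Fin n) :
    (√2 - 1) * zonVolWith v j ≤ zonVolWith v i := by
  have hsqrt : √2 ^ 2 = 2 := Real.sq_sqrt zero_le_two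
  have hsqrt_le : √2 - 1 ≤ 1 := by nlinarith [Real.sqrt_nonneg 2]
  refine mul_zonVolWith_le_of_mul_sum_le hsqrt_le ?_
  rcases eq_or_ne i j with rfl | hij
  · simp
  have hc : 2 * (√2 / 2) ^ 2 = 1 := by rw [div_pow, hsqrt]; norm_num
  have hmix := zonVol_add_le_zonVol_mixPair_add (v := v) hij hc (by positivity)
  have hle := hmax _ ((frameOperator_mixPair hij hc).trans hv)
  rw [show 2 * (√2 / 2) - 1 = √2 - 1 by ring] at hmix
  linarith

end Maximizer

/-- Theorem `th_ineq_v`: if the tight frame `v` (corresponding to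
a maximizing subspace `H` of `H ↦ vol_k([0,1]^n | H)`, with `vᵢ` the projection
of `eᵢ` onto `H`) maximizes the zonotope volume `F` over tight frames, then
`|vᵢ|² ≥ (√2 − 1) |vⱼ|²` for all `i, j ∈ [n]`. -/
theorem stmt_17 (n k : ℕ) (v : Fin n → Fin k → ℝ)
    (hv : ∑ i, Matrix.vecMulVec (v i) (v i) = (1 : Matrix (Fin k) (Fin k) ℝ))
    (hmax : ∀ w : Fin n → Fin k → ℝ,
      (∑ i, Matrix.vecMulVec (w i) (w i) = (1 : Matrix (Fin k) (Fin k) ℝ)) →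
      zonVol w ≤ zonVol v)
    (i j : Fin n) :
    (Real.sqrt 2 - 1) * (v j ⬝ᵥ v j) ≤ v i ⬝ᵥ v i := by
  have hB := sqrt_two_sub_one_mul_zonVolWith_le hv hmax i j
  rw [zonVolWith_eq_of_isMax hv hmax, zonVolWith_eq_of_isMax hv hmax, ← mul_assoc] at hB
  exact le_of_mul_le_mul_right hB (zonVol_pos hv)
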